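/- Let T be an essentially small triangulated category in which every object is a finite direct sum of indecomposables, and let M be an indecomposable object. Define T^{≤0}_M as the additive closure of indecomposables Y admitting a path M ⇝ Y, and T^{≥0}_M as the additive closure of indecomposables Z such that there is no path M ⇝ Z[-1]. Then (T^{≤0}_M, T^{≥0}_M) is a split t-structure on T. -/

import Mathlib

/-!
STATEMENT 12: Let `T` be an essentially small triangulated category in which every object
is a finite direct sum of indecomposables, and let `M` be indecomposable.  Let `T^{≤0}_M`
be the additive closure of the indecomposables `Y` with a path `M ⇝ Y`, and `T^{≥0}_M` the
additive closure of the indecomposables `Z` with no path `M ⇝ Z⟦-1⟧`.  Then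
`(T^{≤0}_M, T^{≥0}_M)` is a split t-structure on `T`.
-/
open CategoryTheory Category Limits Pretriangulated

section PathsAndBlocks

variable {C : Type*} [Category C] [Preadditive C] [HasZeroObject C] [HasShift C ℤ]
  [∀ n : ℤ, (shiftFunctor C n).Additive] [Pretriangulated C]
  [HasBinaryBiproducts C] [HasFiniteBiproducts C]

/-- An object is indecomposable if it is non-zero and has no non-trivial
direct sum decomposition. -/
def IsIndec (X : C) : Prop :=
  ¬ IsZero X ∧ ∀ Y Z : C, (X ≅ Y ⊞ Z) → IsZero Y ∨ IsZero Z

/-- A single step of a path: both objects are indecomposable and either there is a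
non-zero morphism `X ⟶ Y` or `Y = X⟦1⟧`. -/
def PathStep (X Y : C) : Prop :=
  IsIndec X ∧ IsIndec Y ∧ ((∃ f : X ⟶ Y, f ≠ 0) ∨ Nonempty (Y ≅ X⟦(1 : ℤ)⟧))

/-- There is a path `X ⇝ Y`: a finite sequence of path steps. -/
def HasPath : C → C → Prop := Relation.ReflTransGen PathStep

/-- There is a walk from `X` to `Y`: a finite sequence of forward or backward path steps. -/
def HasWalk : C → C → Prop := Relation.ReflTransGen (fun X Y => PathStep X Y ∨ PathStep Y X)

/-- Every object is a finite direct sum of indecomposable objects. -/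
def AllObjectsDecompose : Prop :=
  ∀ X : C, ∃ (n : ℕ) (G : Fin n → C), (∀ i, IsIndec (G i)) ∧ Nonempty (X ≅ ⨁ G)

variable (C) in
/-- A non-trivial decomposition of the triangulated category `C` into a product of two
triangulated subcategories: two iso-closed, shift-closed classes of objects, each
containing a non-zero object, with no non-zero morphisms between them in either
direction, such that every object is a direct sum of an object of each. -/
def IsProductDecomp (P Q : C → Prop) : Prop :=
  (∀ {X Y : C}, (X ≅ Y) → P X → P Y) ∧ (∀ {X Y : C}, (X ≅ Y) → Q X → Q Y) ∧
  (∃ X, P X ∧ ¬ IsZero X) ∧ (∃ X, Q X ∧ ¬ IsZero X) ∧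
  (∀ (X Y : C), P X → Q Y → ∀ f : X ⟶ Y, f = 0) ∧
  (∀ (X Y : C), Q X → P Y → ∀ f : X ⟶ Y, f = 0) ∧
  (∀ (X : C) (n : ℤ), P X → P (X⟦n⟧)) ∧ (∀ (X : C) (n : ℤ), Q X → Q (X⟦n⟧)) ∧
  (∀ X : C, ∃ X' X'' : C, P X' ∧ Q X'' ∧ Nonempty (X ≅ X' ⊞ X''))

variable (C) in
/-- `C` is a block: it admits no non-trivial product decomposition. -/
def IsBlock : Prop := ¬ ∃ P Q : C → Prop, IsProductDecomp C P Q

end PathsAndBlocks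

/-- `X` lies in the additive closure of the class `S` of objects. -/
def memAdd {C : Type*} [Category C] [Preadditive C] [HasBinaryBiproducts C]
    [HasFiniteBiproducts C] (S : C → Prop) (X : C) : Prop :=
  ∃ (n : ℕ) (G : Fin n → C) (_ : ∀ i, S (G i)) (Z : C), Nonempty ((X ⊞ Z) ≅ ⨁ G)

/-!
Split an object into its indecomposable summands reachable from `M` and the rest. A nonzero map
from a reachable indecomposable to another indecomposable extends the path, so there are no
nonzero maps from the first summand to the second, and the biproduct triangle of the splitting
is a truncation triangle with zero connecting morphism. Only the closure of "reachable from `M`"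
under path steps matters, so the same construction works for any class with this property.
-/

section Biproducts

variable {C : Type*} [Category C] [Preadditive C] [HasFiniteBiproducts C]

lemma biproduct.fromSubtype_toSubtype_eq_zero {J : Type} [Finite J] (f : J → C)
    {p q : J → Prop} (hpq : ∀ j, p j → ¬ q j) :
    biproduct.fromSubtype f p ≫ biproduct.toSubtype f q = 0 := by
  ext i j
  simp only [assoc, biproduct.toSubtype_π, zero_comp, comp_zero]
  exact (biproduct.ι_fromSubtype_assoc f p j _).trans
    (biproduct.ι_π_ne _ fun h : (j : J) = i => hpq _ j.2 (h ▸ i.2))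

variable [HasBinaryBiproducts C]

noncomputable def biproduct.isoBiprodSubtype {J : Type} [Finite J] (f : J → C)
    (p : J → Prop) :
    ⨁ f ≅ (⨁ Subtype.restrict p f) ⊞ (⨁ Subtype.restrict (fun j => ¬ p j) f) where
  hom := biprod.lift (biproduct.toSubtype f p) (biproduct.toSubtype f _)
  inv := biprod.desc (biproduct.fromSubtype f p) (biproduct.fromSubtype f _)
  hom_inv_id := by
    classical
    ext i j
    by_cases h : p i <;> simp [biproduct.toSubtype_fromSubtype, h]
  inv_hom_id := by
    apply biprod.hom_ext' <;> apply biprod.hom_ext <;>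
      simp [biproduct.fromSubtype_toSubtype_eq_zero f fun j (h : p j) (h' : ¬ p j) => h' h,
        biproduct.fromSubtype_toSubtype_eq_zero f fun j (h : ¬ p j) (h' : p j) => h h']

variable {S S' : C → Prop}

lemma memAdd_of_iso {X Y : C} (e : X ≅ Y) (h : memAdd S X) : memAdd S Y := by
  obtain ⟨n, G, hG, Z, ⟨e'⟩⟩ := h
  exact ⟨n, G, hG, Z, ⟨biprod.mapIso e.symm (Iso.refl Z) ≪≫ e'⟩⟩

lemma memAdd_mono (h : ∀ Y, S Y → S' Y) {X : C} (hX : memAdd S X) : memAdd S' X := by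
  obtain ⟨n, G, hG, Z, e⟩ := hX
  exact ⟨n, G, fun i => h _ (hG i), Z, e⟩

lemma memAdd_congr (h : ∀ Y, S Y ↔ S' Y) (X : C) : memAdd S X ↔ memAdd S' X :=
  ⟨memAdd_mono fun Y => (h Y).1, memAdd_mono fun Y => (h Y).2⟩

open ZeroObject in
lemma memAdd_biproduct [HasZeroObject C] {J : Type} [Finite J] (G : J → C)
    (hG : ∀ j, S (G j)) : memAdd S (⨁ G) := by
  obtain ⟨m, ⟨e⟩⟩ := Finite.exists_equiv_fin J
  exact ⟨m, G ∘ e.symm, fun i => hG _, 0, ⟨(isoBiprodZero (isZero_zero C)).symm ≪≫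
    biproduct.whiskerEquiv e fun j => eqToIso (congrArg G (e.symm_apply_apply j))⟩⟩

lemma memAdd_hom_eq_zero (h : ∀ Y Z : C, S Y → S' Z → ∀ g : Y ⟶ Z, g = 0) {X Y : C}
    (hX : memAdd S X) (hY : memAdd S' Y) (f : X ⟶ Y) : f = 0 := by
  obtain ⟨n, G, hG, Z, ⟨e⟩⟩ := hX
  obtain ⟨n', G', hG', Z', ⟨e'⟩⟩ := hY
  have hmid : e.inv ≫ biprod.fst ≫ f ≫ biprod.inl ≫ e'.hom = 0 :=
    biproduct.hom_ext' _ _ fun i => biproduct.hom_ext _ _ fun j => by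
      simpa using h _ _ (hG i) (hG' j)
        (biproduct.ι G i ≫ (e.inv ≫ biprod.fst ≫ f ≫ biprod.inl ≫ e'.hom) ≫ biproduct.π G' j)
  calc f = biprod.inl ≫ e.hom ≫ (e.inv ≫ biprod.fst ≫ f ≫ biprod.inl ≫ e'.hom) ≫
        e'.inv ≫ biprod.fst := by simp
    _ = 0 := by simp [hmid]

lemma memAdd_map {D : Type*} [Category D] [Preadditive D] [HasFiniteBiproducts D]
    [HasBinaryBiproducts D] {S' : D → Prop} (F : C ⥤ D) [F.Additive]
    (hF : ∀ Y, S Y → S' (F.obj Y)) {X : C} (hX : memAdd S X) : memAdd S' (F.obj X) := by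
  have := preservesBinaryBiproducts_of_preservesBiproducts F
  obtain ⟨n, G, hG, Z, ⟨e⟩⟩ := hX
  exact ⟨n, fun i => F.obj (G i), fun i => hF _ (hG i), F.obj Z,
    ⟨(F.mapBiprod X Z).symm ≪≫ F.mapIso e ≪≫ F.mapBiproduct G⟩⟩

end Biproducts

lemma IsIndec.of_iso {C : Type*} [Category C] [Preadditive C] [HasBinaryBiproducts C]
    {X Y : C} (hX : IsIndec X) (e : X ≅ Y) : IsIndec Y :=
  ⟨fun h => hX.1 (h.of_iso e), fun U V e' => hX.2 U V (e ≪≫ e')⟩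

lemma isZero_of_isZero_shift {C : Type*} [Category C] [Preadditive C] [HasShift C ℤ]
    [∀ n : ℤ, (shiftFunctor C n).Additive] {X : C} {n : ℤ} (h : IsZero (X⟦n⟧)) : IsZero X :=
  ((shiftFunctor C (-n)).map_isZero h).of_iso ((shiftEquiv C n).unitIso.app X)

section Paths

variable {C : Type*} [Category C] [Preadditive C] [HasShift C ℤ] [HasBinaryBiproducts C]

def IsPathClosed (S : C → Prop) : Prop :=
  ∀ ⦃X Y : C⦄, PathStep X Y → S X → S Y

lemma isPathClosed_hasPath (M : C) : IsPathClosed (HasPath M) :=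
  fun _ _ hXY hX => hX.tail hXY

namespace IsPathClosed

variable {S : C → Prop}

lemma of_hom (hS : IsPathClosed S) {X Y : C} (hX : IsIndec X) (hY : IsIndec Y) (f : X ⟶ Y)
    (hf : f ≠ 0) : S X → S Y :=
  hS ⟨hX, hY, Or.inl ⟨f, hf⟩⟩

lemma iff_of_iso (hS : IsPathClosed S) {X Y : C} (hX : IsIndec X) (e : X ≅ Y) : S X ↔ S Y :=
  have of_iso {X Y : C} (hX : IsIndec X) (e : X ≅ Y) : S X → S Y :=
    hS.of_hom hX (hX.of_iso e) e.hom fun h => hX.1 (IsZero.of_mono_eq_zero _ h)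
  ⟨of_iso hX e, of_iso (hX.of_iso e) e.symm⟩

end IsPathClosed

variable [∀ n : ℤ, (shiftFunctor C n).Additive]

lemma IsIndec.shift {X : C} (hX : IsIndec X) (n : ℤ) : IsIndec (X⟦n⟧) := by
  have := preservesBinaryBiproducts_of_preservesBiproducts (shiftFunctor C (-n))
  refine ⟨fun h => hX.1 (isZero_of_isZero_shift h), fun U V e => ?_⟩
  have e' : X ≅ U⟦-n⟧ ⊞ V⟦-n⟧ := (shiftEquiv C n).unitIso.app X ≪≫
    (shiftFunctor C (-n)).mapIso e ≪≫ (shiftFunctor C (-n)).mapBiprod U V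
  exact (hX.2 _ _ e').imp isZero_of_isZero_shift isZero_of_isZero_shift

namespace IsPathClosed

variable {S : C → Prop}

lemma shift_one (hS : IsPathClosed S) {X : C} (hX : IsIndec X) : S X → S (X⟦(1 : ℤ)⟧) :=
  hS ⟨hX, hX.shift 1, Or.inr ⟨Iso.refl _⟩⟩

lemma shift_shift_iff (hS : IsPathClosed S) {Y : C} (hY : IsIndec Y) {a b c : ℤ}
    (h : a + b = c) : S (Y⟦a⟧⟦b⟧) ↔ S (Y⟦c⟧) :=
  (hS.iff_of_iso (hY.shift c) ((shiftFunctorAdd' C a b c h).app Y)).symm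

lemma shift_iff_of_eq_zero (hS : IsPathClosed S) {Y : C} (hY : IsIndec Y) {a : ℤ}
    (h : a = 0) : S (Y⟦a⟧) ↔ S Y :=
  hS.iff_of_iso (hY.shift a) (eqToIso (by rw [h]) ≪≫ (shiftFunctorZero C ℤ).app Y)

end IsPathClosed

end Paths

lemma distinguished_of_iso_biprod {C : Type*} [Category C] [Preadditive C] [HasZeroObject C]
    [HasShift C ℤ] [∀ n : ℤ, (shiftFunctor C n).Additive] [Pretriangulated C]
    [HasBinaryBiproducts C]
    {A X Y : C} (φ : A ≅ X ⊞ Y) :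
    Triangle.mk (biprod.inl ≫ φ.inv) (φ.hom ≫ biprod.snd) (0 : Y ⟶ X⟦(1 : ℤ)⟧) ∈
      distTriang C := by
  refine isomorphic_distinguished _ (binaryBiproductTriangle_distinguished X Y) _
    (Triangle.isoMk _ _ (Iso.refl X) φ (Iso.refl Y) ?_ ?_ ?_)
  · exact (assoc _ _ _).trans
      ((congrArg _ φ.inv_hom_id).trans ((comp_id _).trans (id_comp _).symm))
  · exact comp_id _
  · exact zero_comp.trans comp_zero.symm

section PathTStructure

variable {C : Type*} [Category C] [Preadditive C] [HasShift C ℤ] [HasBinaryBiproducts C]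
  [HasFiniteBiproducts C]

variable (S : C → Prop)

def pathLE (n : ℤ) : ObjectProperty C :=
  memAdd fun Y => IsIndec Y ∧ S (Y⟦n⟧)

def pathGE (n : ℤ) : ObjectProperty C :=
  memAdd fun Z => IsIndec Z ∧ ¬ S (Z⟦n - 1⟧)

variable {S}

lemma pathGE_zero_iff (X : C) :
    pathGE S 0 X ↔ memAdd (fun Z => IsIndec Z ∧ ¬ S (Z⟦(-1 : ℤ)⟧)) X := by
  simp only [pathGE, zero_sub]

variable [∀ n : ℤ, (shiftFunctor C n).Additive]

lemma pathLE_shift (hS : IsPathClosed S) (n a n' : ℤ) (h : a + n' = n) (X : C)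
    (hX : pathLE S n X) : pathLE S n' (X⟦a⟧) :=
  memAdd_map (shiftFunctor C a) (fun _ ⟨hY, hYS⟩ =>
    ⟨hY.shift a, (hS.shift_shift_iff hY h).2 hYS⟩) hX

lemma pathGE_shift (hS : IsPathClosed S) (n a n' : ℤ) (h : a + n' = n) (X : C)
    (hX : pathGE S n X) : pathGE S n' (X⟦a⟧) :=
  memAdd_map (shiftFunctor C a) (fun _ ⟨hZ, hZS⟩ =>
    ⟨hZ.shift a, fun h' => hZS ((hS.shift_shift_iff hZ (by omega)).1 h')⟩) hX

lemma pathLE_zero_le_one (hS : IsPathClosed S) : pathLE S 0 ≤ pathLE S 1 := fun _ =>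
  memAdd_mono fun _ ⟨hY, hYS⟩ =>
    ⟨hY, (hS.shift_shift_iff hY (zero_add 1)).1 (hS.shift_one (hY.shift 0) hYS)⟩

lemma pathGE_one_le_zero (hS : IsPathClosed S) : pathGE S 1 ≤ pathGE S 0 := fun _ =>
  memAdd_mono fun Z ⟨hZ, hZS⟩ => ⟨hZ, fun h => hZS <|
    (hS.shift_shift_iff hZ (by norm_num)).1 (hS.shift_one (hZ.shift _) h)⟩

lemma hom_eq_zero_of_pathLE_of_pathGE (hS : IsPathClosed S) ⦃X Y : C⦄ (f : X ⟶ Y)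
    (hX : pathLE S 0 X) (hY : pathGE S 1 Y) : f = 0 := by
  refine memAdd_hom_eq_zero (fun Y Z ⟨hY, hYS⟩ ⟨hZ, hZS⟩ g => ?_) hX hY f
  by_contra hg
  exact hZS <| (hS.shift_iff_of_eq_zero hZ (sub_self 1)).2 <|
    hS.of_hom hY hZ g hg ((hS.shift_iff_of_eq_zero hY rfl).1 hYS)

lemma pathLE_zero_iff (hS : IsPathClosed S) (X : C) :
    pathLE S 0 X ↔ memAdd (fun Y => IsIndec Y ∧ S Y) X :=
  memAdd_congr (fun _ => and_congr_right fun hY => hS.shift_iff_of_eq_zero hY rfl) X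

variable [HasZeroObject C] [Pretriangulated C]

lemma exists_split_triangle (hS : IsPathClosed S) (hdec : AllObjectsDecompose (C := C))
    (A : C) : ∃ (X Y : C) (_ : pathLE S 0 X) (_ : pathGE S 1 Y) (f : X ⟶ A) (g : A ⟶ Y),
      Triangle.mk f g (0 : Y ⟶ X⟦(1 : ℤ)⟧) ∈ distTriang C := by
  obtain ⟨n, G, hG, ⟨e⟩⟩ := hdec A
  let p : Fin n → Prop := fun i => S (G i)
  refine ⟨_, _, memAdd_biproduct (Subtype.restrict p G) fun j =>
      ⟨hG j, (hS.shift_iff_of_eq_zero (hG j) rfl).2 j.2⟩,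
    memAdd_biproduct (Subtype.restrict (fun j => ¬ p j) G) fun j =>
      ⟨hG j, fun h => j.2 ((hS.shift_iff_of_eq_zero (hG j) (sub_self 1)).1 h)⟩,
    _, _, distinguished_of_iso_biprod (e ≪≫ biproduct.isoBiprodSubtype G p)⟩

def pathTStructure (hS : IsPathClosed S) (hdec : AllObjectsDecompose (C := C)) :
    Triangulated.TStructure C where
  le := pathLE S
  ge := pathGE S
  le_isClosedUnderIsomorphisms _ := ⟨memAdd_of_iso⟩
  ge_isClosedUnderIsomorphisms _ := ⟨memAdd_of_iso⟩
  le_shift := pathLE_shift hS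
  ge_shift := pathGE_shift hS
  zero' := hom_eq_zero_of_pathLE_of_pathGE hS
  le_zero_le := pathLE_zero_le_one hS
  ge_one_le := pathGE_one_le_zero hS
  exists_triangle_zero_one A := by
    obtain ⟨X, Y, hX, hY, f, g, hT⟩ := exists_split_triangle hS hdec A
    exact ⟨X, Y, hX, hY, f, g, 0, hT⟩

end PathTStructure

open Triangulated in
theorem split_tStructure_from_indecomposable
    {C : Type*} [Category C] [Preadditive C] [HasZeroObject C] [HasShift C ℤ]
    [∀ n : ℤ, (shiftFunctor C n).Additive] [Pretriangulated C]
    [HasBinaryBiproducts C] [HasFiniteBiproducts C] [EssentiallySmall C]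
    (hdec : AllObjectsDecompose (C := C)) (M : C) (hM : IsIndec M) :
    ∃ t : TStructure C,
      (∀ X : C, t.le 0 X ↔ memAdd (fun Y => IsIndec Y ∧ HasPath M Y) X) ∧
      (∀ X : C, t.ge 0 X ↔ memAdd (fun Z => IsIndec Z ∧ ¬ HasPath M (Z⟦(-1 : ℤ)⟧)) X) ∧
      (∀ X : C, ∃ (P Q : C) (_ : t.ge 1 P) (_ : t.le (-1) Q)
        (f : X ⟶ P) (h : Q ⟶ X⟦(1 : ℤ)⟧),
        Triangle.mk f (0 : P ⟶ Q) h ∈ distTriang C) := by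
  have hS := isPathClosed_hasPath M
  refine ⟨pathTStructure hS hdec, pathLE_zero_iff hS, pathGE_zero_iff, fun X => ?_⟩
  obtain ⟨X₁, X₂, h₁, h₂, f, g, hT⟩ := exists_split_triangle hS hdec X
  exact ⟨X₂, X₁⟦(1 : ℤ)⟧, h₂, pathLE_shift hS 0 1 (-1) (by norm_num) X₁ h₁, g, -f⟦(1 : ℤ)⟧',
    rot_of_distTriang _ hT⟩
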